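/- Main correspondence theorem for standard processes: for every standard cCSP process term P built from atomic actions, SKIP, THROW, YIELD, sequential composition, choice, and parallel composition, the derived trace set DT(P) = {t | P —t→ 0} equals the denotational trace set T(P). -/
import Mathlib


namespace CCSP

/-- Terminal events Ω = {✓, !, ?}. -/
inductive Omega : Type
  | tick | bang | quest
deriving DecidableEq

/-- Events: normal events from Σ or terminal events from Ω. -/
inductive Ev (σ : Type) : Type
  | norm (a : σ)
  | term (ω : Omega)

/-- Standard cCSP process terms (with the null process 0). -/
inductive Proc (σ : Type) : Type
  | zero
  | atom (a : σ)
  | skip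
  | throw
  | yield
  | seq (P Q : Proc σ)
  | choice (P Q : Proc σ)
  | par (P Q : Proc σ)

open Proc Ev Omega

/-- Synchronisation of terminal events: ω ∈ ω₁ & ω₂. -/
inductive Sync : Omega → Omega → Omega → Prop
  | tick : Sync .tick .tick .tick
  | bangL (ω : Omega) : Sync .bang ω .bang
  | bangR (ω : Omega) : Sync ω .bang .bang
  | quest : Sync .quest .quest .quest
  | questTick : Sync .quest .tick .tick
  | tickQuest : Sync .tick .quest .tick

variable {σ : Type}

/-- Labelled transition system for standard processes. -/
inductive Step : Proc σ → Ev σ → Proc σ → Prop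
  | atom (a : σ) : Step (atom a) (norm a) skip
  | skip : Step skip (term .tick) zero
  | throw : Step throw (term .bang) zero
  | yieldQ : Step yield (term .quest) zero
  | yieldT : Step yield (term .tick) zero
  | seqN {P P' Q : Proc σ} {a : σ} :
      Step P (norm a) P' → Step (seq P Q) (norm a) (seq P' Q)
  | seqT {P Q R : Proc σ} {e : Ev σ} :
      Step P (term .tick) zero → Step Q e R → Step (seq P Q) e R
  | seqA {P Q : Proc σ} {ω : Omega} :
      Step P (term ω) zero → ω ≠ .tick → Step (seq P Q) (term ω) zero
  | chL {P Q R : Proc σ} {e : Ev σ} : Step P e R → Step (choice P Q) e R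
  | chR {P Q R : Proc σ} {e : Ev σ} : Step Q e R → Step (choice P Q) e R
  | parL {P P' Q : Proc σ} {a : σ} :
      Step P (norm a) P' → Step (par P Q) (norm a) (par P' Q)
  | parR {P Q Q' : Proc σ} {a : σ} :
      Step Q (norm a) Q' → Step (par P Q) (norm a) (par P Q')
  | parT {P Q : Proc σ} {ω₁ ω₂ ω : Omega} :
      Step P (term ω₁) zero → Step Q (term ω₂) zero → Sync ω₁ ω₂ ω →
      Step (par P Q) (term ω) zero

/-- A complete trace: a sequence of normal events followed by one terminal event. -/
abbrev Trace (σ : Type) := List σ × Omega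

/-- Lifted transition relation over sequences of normal events ending in ω. -/
def Lift : Proc σ → List σ → Omega → Proc σ → Prop
  | P, [], ω, Q => Step P (term ω) Q
  | P, a :: t, ω, Q => ∃ P', Step P (norm a) P' ∧ Lift P' t ω Q

/-- Lifted transition relation over complete traces. -/
def LiftT (P : Proc σ) (t : Trace σ) (Q : Proc σ) : Prop := Lift P t.1 t.2 Q

/-- Derived traces: DT(P) = {t | P —t→ 0}. -/
def DT (P : Proc σ) : Set (Trace σ) := {t | LiftT P t zero}

/-- Trace sequential composition: p ; q. -/
def tseq (p q : Trace σ) : Trace σ :=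
  if p.2 = Omega.tick then (p.1 ++ q.1, q.2) else p

/-- Prefixing a normal event to a trace. -/
def tcons (a : σ) (p : Trace σ) : Trace σ := (a :: p.1, p.2)

/-- Interleaving of finite sequences: `Inter p q t` means t ∈ p ||| q. -/
inductive Inter : List σ → List σ → List σ → Prop
  | nil : Inter [] [] []
  | left {p q t : List σ} {a : σ} : Inter p q t → Inter (a :: p) q (a :: t)
  | right {p q t : List σ} {a : σ} : Inter p q t → Inter p (a :: q) (a :: t)

/-- Trace parallel composition: interleaving of the normal parts followed by
    synchronisation of terminal events. -/
def tpar (p q : Trace σ) : Set (Trace σ) :=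
  {t | Inter p.1 q.1 t.1 ∧ Sync p.2 q.2 t.2}

/-- Denotational trace semantics of standard processes. -/
def T : Proc σ → Set (Trace σ)
  | .zero => ∅
  | .atom a => {([a], .tick)}
  | .skip => {([], .tick)}
  | .throw => {([], .bang)}
  | .yield => {([], .quest), ([], .tick)}
  | .seq P Q => {t | ∃ p ∈ T P, ∃ q ∈ T Q, t = tseq p q}
  | .choice P Q => T P ∪ T Q
  | .par P Q => {t | ∃ p ∈ T P, ∃ q ∈ T Q, t ∈ tpar p q}

/-- P is a process term of the language (built from atoms, SKIP, THROW, YIELD,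
    sequential composition, choice and parallel composition; not 0). -/
def IsTerm : Proc σ → Prop
  | .zero => False
  | .atom _ => True
  | .skip => True
  | .throw => True
  | .yield => True
  | .seq P Q => IsTerm P ∧ IsTerm Q
  | .choice P Q => IsTerm P ∧ IsTerm Q
  | .par P Q => IsTerm P ∧ IsTerm Q

lemma sync_total (ω₁ ω₂ : Omega) : ∃ ω, Sync ω₁ ω₂ ω := by
  cases ω₁ <;> cases ω₂ <;> exact ⟨_, by constructor⟩

lemma inter_nil_left (q : List σ) : Inter [] q q := by
  induction q with
  | nil => exact .nil
  | cons a q ih => exact .right ih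

lemma inter_append (p q : List σ) : Inter p q (p ++ q) := by
  induction p with
  | nil => exact inter_nil_left q
  | cons a p ih => exact .left ih

lemma T_nonempty {P : Proc σ} (hP : IsTerm P) : ∃ t, t ∈ T P := by
  induction P with
  | zero => exact absurd hP id
  | atom a => exact ⟨_, rfl⟩
  | skip => exact ⟨_, rfl⟩
  | throw => exact ⟨_, rfl⟩
  | yield => exact ⟨_, Or.inl rfl⟩
  | seq P Q ihP ihQ =>
    obtain ⟨p, hp⟩ := ihP hP.1; obtain ⟨q, hq⟩ := ihQ hP.2
    exact ⟨tseq p q, p, hp, q, hq, rfl⟩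
  | choice P Q ihP ihQ =>
    obtain ⟨p, hp⟩ := ihP hP.1; exact ⟨p, Or.inl hp⟩
  | par P Q ihP ihQ =>
    obtain ⟨p, hp⟩ := ihP hP.1; obtain ⟨q, hq⟩ := ihQ hP.2
    obtain ⟨ω, hω⟩ := sync_total p.2 q.2
    exact ⟨(p.1 ++ q.1, ω), p, hp, q, hq, inter_append p.1 q.1, hω⟩

lemma lift_seq_tick {Q : Proc σ} :
    ∀ {P : Proc σ} {p q : List σ} {ω : Omega},
    Lift P p .tick zero → Lift Q q ω zero → Lift (seq P Q) (p ++ q) ω zero := by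
  intro P p
  induction p generalizing P with
  | nil =>
    intro q ω hP hQ
    cases q with
    | nil => exact Step.seqT hP hQ
    | cons a q =>
      obtain ⟨Q', hs, hl⟩ := hQ
      exact ⟨Q', Step.seqT hP hs, hl⟩
  | cons a p ih =>
    intro q ω hP hQ
    obtain ⟨P', hs, hl⟩ := hP
    exact ⟨seq P' Q, Step.seqN hs, ih hl hQ⟩

lemma lift_seq_abort {Q : Proc σ} :
    ∀ {P : Proc σ} {p : List σ} {ω : Omega},
    Lift P p ω zero → ω ≠ .tick → Lift (seq P Q) p ω zero := by
  intro P p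
  induction p generalizing P with
  | nil => intro ω hP hne; exact Step.seqA hP hne
  | cons a p ih =>
    intro ω hP hne
    obtain ⟨P', hs, hl⟩ := hP
    exact ⟨seq P' Q, Step.seqN hs, ih hl hne⟩

lemma lift_par {p q t : List σ} (hI : Inter p q t) :
    ∀ {P Q : Proc σ} {ω₁ ω₂ ω : Omega},
    Lift P p ω₁ zero → Lift Q q ω₂ zero → Sync ω₁ ω₂ ω →
    Lift (par P Q) t ω zero := by
  induction hI with
  | nil => intro P Q ω₁ ω₂ ω hP hQ hs; exact Step.parT hP hQ hs
  | left _ ih =>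
    intro P Q ω₁ ω₂ ω hP hQ hs
    obtain ⟨P', hst, hl⟩ := hP
    exact ⟨par P' Q, Step.parL hst, ih hl hQ hs⟩
  | right _ ih =>
    intro P Q ω₁ ω₂ ω hP hQ hs
    obtain ⟨Q', hst, hl⟩ := hQ
    exact ⟨par P Q', Step.parR hst, ih hP hl hs⟩

lemma lift_choice_inv {P Q : Proc σ} {t : List σ} {ω : Omega}
    (h : Lift (choice P Q) t ω zero) : Lift P t ω zero ∨ Lift Q t ω zero := by
  cases t with
  | nil => cases h with
    | chL h => exact Or.inl h
    | chR h => exact Or.inr h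
  | cons a t =>
    obtain ⟨R, hs, hl⟩ := h
    cases hs with
    | chL h => exact Or.inl ⟨R, h, hl⟩
    | chR h => exact Or.inr ⟨R, h, hl⟩

lemma lift_seq_inv {Q : Proc σ} :
    ∀ {t : List σ} {P : Proc σ} {ω : Omega}, Lift (seq P Q) t ω zero →
    (∃ p q, Lift P p .tick zero ∧ Lift Q q ω zero ∧ t = p ++ q) ∨
    (ω ≠ .tick ∧ Lift P t ω zero) := by
  intro t
  induction t with
  | nil =>
    intro P ω h
    cases h with
    | seqT h1 h2 => exact Or.inl ⟨[], [], h1, h2, rfl⟩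
    | seqA h1 hne => exact Or.inr ⟨hne, h1⟩
  | cons a t ih =>
    intro P ω h
    obtain ⟨R, hs, hl⟩ := h
    cases hs with
    | seqN hP =>
      rcases ih hl with ⟨p, q, h1, h2, h3⟩ | ⟨hne, h1⟩
      · exact Or.inl ⟨a :: p, q, ⟨_, hP, h1⟩, h2, by simp [h3]⟩
      · exact Or.inr ⟨hne, _, hP, h1⟩
    | seqT h1 h2 => exact Or.inl ⟨[], a :: t, h1, ⟨R, h2, hl⟩, rfl⟩

lemma lift_par_inv :
    ∀ {t : List σ} {P Q : Proc σ} {ω : Omega}, Lift (par P Q) t ω zero →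
    ∃ p ω₁ q ω₂, Lift P p ω₁ zero ∧ Lift Q q ω₂ zero ∧
      Inter p q t ∧ Sync ω₁ ω₂ ω := by
  intro t
  induction t with
  | nil =>
    intro P Q ω h
    cases h with
    | parT h1 h2 hs => exact ⟨[], _, [], _, h1, h2, .nil, hs⟩
  | cons a t ih =>
    intro P Q ω h
    obtain ⟨R, hs, hl⟩ := h
    cases hs with
    | parL hP =>
      obtain ⟨p, ω₁, q, ω₂, h1, h2, hI, hS⟩ := ih hl
      exact ⟨a :: p, ω₁, q, ω₂, ⟨_, hP, h1⟩, h2, .left hI, hS⟩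
    | parR hQ =>
      obtain ⟨p, ω₁, q, ω₂, h1, h2, hI, hS⟩ := ih hl
      exact ⟨p, ω₁, a :: q, ω₂, h1, ⟨_, hQ, h2⟩, .right hI, hS⟩

/-- main correspondence theorem for standard processes. -/
theorem standard_correspondence {σ : Type} (P : Proc σ) (hP : IsTerm P) :
    DT P = T P := by
  induction P with
  | zero => exact absurd hP id
  | atom a =>
    ext ⟨t, ω⟩
    constructor
    · rintro h
      cases t with
      | nil => cases h
      | cons b t =>
        obtain ⟨R, hs, hl⟩ := h
        cases hs
        cases t with
        | nil => cases hl; rfl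
        | cons c t => obtain ⟨R', hs', _⟩ := hl; cases hs'
    · intro h
      replace h : (t, ω) = ([a], Omega.tick) := h
      cases h
      exact ⟨Proc.skip, Step.atom a, Step.skip⟩
  | skip =>
    ext ⟨t, ω⟩
    constructor
    · rintro h
      cases t with
      | nil => cases h; rfl
      | cons b t => obtain ⟨R, hs, _⟩ := h; cases hs
    · intro h
      replace h : (t, ω) = ([], Omega.tick) := h
      cases h; exact Step.skip
  | throw =>
    ext ⟨t, ω⟩
    constructor
    · rintro h
      cases t with
      | nil => cases h; rfl
      | cons b t => obtain ⟨R, hs, _⟩ := h; cases hs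
    · intro h
      replace h : (t, ω) = ([], Omega.bang) := h
      cases h; exact Step.throw
  | yield =>
    ext ⟨t, ω⟩
    constructor
    · rintro h
      cases t with
      | nil =>
        cases h with
        | yieldQ => exact Or.inl rfl
        | yieldT => exact Or.inr rfl
      | cons b t => obtain ⟨R, hs, _⟩ := h; cases hs
    · intro h
      replace h : (t, ω) = ([], Omega.quest) ∨ (t, ω) = ([], Omega.tick) := h
      rcases h with h | h <;> cases h
      · exact Step.yieldQ
      · exact Step.yieldT
  | seq P Q ihP ihQ =>
    have hTP := ihP hP.1; have hTQ := ihQ hP.2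
    ext ⟨t, ω⟩
    constructor
    · intro h
      rcases lift_seq_inv h with ⟨p, q, h1, h2, h3⟩ | ⟨hne, h1⟩
      · refine ⟨(p, .tick), hTP ▸ h1, (q, ω), hTQ ▸ h2, ?_⟩
        simp only [tseq, if_pos rfl]; exact Prod.ext h3 rfl
      · obtain ⟨q, hq⟩ := T_nonempty hP.2
        refine ⟨(t, ω), hTP ▸ h1, q, hq, ?_⟩
        simp [tseq, hne]
    · rintro ⟨⟨p, ωp⟩, hp, ⟨q, ωq⟩, hq, ht⟩
      rw [← hTP] at hp; rw [← hTQ] at hq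
      by_cases hωp : ωp = Omega.tick
      · subst hωp
        simp only [tseq, if_pos rfl] at ht
        cases ht
        exact lift_seq_tick hp hq
      · simp only [tseq, if_neg hωp] at ht
        cases ht
        exact lift_seq_abort hp hωp
  | choice P Q ihP ihQ =>
    have hTP := ihP hP.1; have hTQ := ihQ hP.2
    ext ⟨t, ω⟩
    constructor
    · intro h
      rcases lift_choice_inv h with h | h
      · exact Or.inl (hTP ▸ h)
      · exact Or.inr (hTQ ▸ h)
    · rintro (h | h)
      · rw [← hTP] at h
        cases t with
        | nil => exact Step.chL h
        | cons a t => obtain ⟨R, hs, hl⟩ := h; exact ⟨R, Step.chL hs, hl⟩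
      · rw [← hTQ] at h
        cases t with
        | nil => exact Step.chR h
        | cons a t => obtain ⟨R, hs, hl⟩ := h; exact ⟨R, Step.chR hs, hl⟩
  | par P Q ihP ihQ =>
    have hTP := ihP hP.1; have hTQ := ihQ hP.2
    ext ⟨t, ω⟩
    constructor
    · intro h
      obtain ⟨p, ω₁, q, ω₂, h1, h2, hI, hS⟩ := lift_par_inv h
      exact ⟨(p, ω₁), hTP ▸ h1, (q, ω₂), hTQ ▸ h2, hI, hS⟩
    · rintro ⟨⟨p, ωp⟩, hp, ⟨q, ωq⟩, hq, hI, hS⟩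
      rw [← hTP] at hp; rw [← hTQ] at hq
      exact lift_par hI hp hq hS
end CCSP
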